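/- Let 0 ≤ m ≤ ⌊n/2⌋ and 0 ≤ i ≤ n−2m. Then for every 2 ≤ r ≤ n, the function g_T^{m,i} is an eigenvector of the Murphy operator M_r: M_r g_T^{m,i} = c_r · g_T^{m,i}, where c_r = (r−1)/2 if r ≤ 2m and r is odd, c_r = r/2 − 2 if r ≤ 2m and r is even, and c_r = r − m − 1 if r > 2m. (These constants are the contents of the boxes of the column reading tableau of shape (n−m,m).) -/
import Mathlib


open Finset

attribute [local instance] Classical.propDecidable

/-- Stationary distribution of the binary Burnside process. -/
noncomputable def piDist (n : ℕ) (U : Finset ℕ) : ℝ :=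
  1 / ((n + 1) * (n.choose U.card))

/-- Binary Burnside transition matrix entry. -/
noncomputable def Kmat (n : ℕ) (x y : Finset ℕ) : ℝ :=
  (((2 * (n - (x ∪ y).card)).choose (n - (x ∪ y).card) : ℝ) *
      ((2 * ((y \ x).card)).choose ((y \ x).card)) *
      ((2 * ((x \ y).card)).choose ((x \ y).card)) *
      ((2 * ((x ∩ y).card)).choose ((x ∩ y).card))) /
    (4 ^ n * (((n - (x ∪ y).card) + (y \ x).card).choose (n - (x ∪ y).card)) *
      (((x \ y).card + (x ∩ y).card).choose ((x \ y).card)))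

/-- Action of K_n on functions. -/
noncomputable def Kop (n : ℕ) (f : Finset ℕ → ℝ) : Finset ℕ → ℝ :=
  fun x => ∑ y ∈ (Finset.Icc 1 n).powerset, Kmat n x y * f y

/-- s-step transition probabilities. -/
noncomputable def Kpow (n : ℕ) : ℕ → Finset ℕ → Finset ℕ → ℝ
  | 0 => fun x y => if x = y then 1 else 0
  | s + 1 => fun x y => ∑ z ∈ (Finset.Icc 1 n).powerset, Kmat n x z * Kpow n s z y

/-- Chi-square distance to stationarity after s steps, started at x. -/
noncomputable def chiSq (n s : ℕ) (x : Finset ℕ) : ℝ :=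
  ∑ y ∈ (Finset.Icc 1 n).powerset, (Kpow n s x y - piDist n y) ^ 2 / piDist n y

/-- Eigenvalues. -/
noncomputable def betaEV (k : ℕ) : ℝ := (((2 * k).choose k : ℝ)) ^ 2 / 16 ^ k

/-- The eigenvectors f_S of Diaconis–Lin–Ram. -/
noncomputable def fSvec (S : Finset ℕ) : Finset ℕ → ℝ :=
  fun U => (-1 : ℝ) ^ ((S ∩ U).card) * (S.card.choose ((S ∩ U).card))

/-- Inner product with respect to π. -/
noncomputable def innerPi (n : ℕ) (f g : Finset ℕ → ℝ) : ℝ :=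
  ∑ U ∈ (Finset.Icc 1 n).powerset, f U * g U * piDist n U

/-- The scalars T_{m,n}^{(ℓ)}(i). -/
noncomputable def Tcoef (n m ℓ i : ℕ) : ℝ :=
  ∑ j ∈ Finset.range (i + 1),
    if j ≤ ℓ then
      (-1 : ℝ) ^ (m + j) * ((2 * m + ℓ).choose (m + j)) * (i.choose j) *
        ((n - 2 * m - i).choose (ℓ - j))
    else 0

/-- The vector g_T^{m,i} associated to the column reading tableau. -/
noncomputable def gT (n m i : ℕ) : Finset ℕ → ℝ := fun U =>
  if (∀ r ∈ Finset.Icc 1 m, ((2 * r - 1 ∈ U) ↔ ¬(2 * r ∈ U))) ∧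
      (U ∩ Finset.Icc (2 * m + 1) n).card = i then
    (-1 : ℝ) ^ ((U ∩ (Finset.range m).image (fun r => 2 * r + 1)).card)
  else 0

/-- The vector f_T^{m,ℓ} associated to the column reading tableau. -/
noncomputable def fT (n m ℓ : ℕ) : Finset ℕ → ℝ :=
  fun U => ∑ i ∈ Finset.range (n - 2 * m + 1), Tcoef n m ℓ i * gT n m i U

/-- Action of the adjacent transposition s_t (switching t and t+1) on functions. -/
noncomputable def sOp (t : ℕ) (f : Finset ℕ → ℝ) : Finset ℕ → ℝ :=
  fun U => f (U.image (Equiv.swap t (t + 1)))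

/-- The factor s_t − 1/(t − 2r + 2) (r is the 1-indexed position in the second row). -/
noncomputable def tauFactor (r t : ℕ) (f : Finset ℕ → ℝ) : Finset ℕ → ℝ :=
  fun U => sOp t f U - ((t : ℝ) - 2 * r + 2)⁻¹ * f U

/-- Composition (s_{2r+k-1} − ⋯)⋯(s_{2r} − 1/2) of k successive factors. -/
noncomputable def tauComp (r : ℕ) : ℕ → (Finset ℕ → ℝ) → (Finset ℕ → ℝ)
  | 0 => id
  | k + 1 => fun f => tauFactor r (2 * r + k) (tauComp r k f)

/-- τ_Q^{(r)} τ_Q^{(r+1)} ⋯ for the remaining second-row entries. -/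
noncomputable def tauQAux : ℕ → List ℕ → (Finset ℕ → ℝ) → (Finset ℕ → ℝ)
  | _, [] => id
  | r, a :: rest => fun f => tauComp r (a - 2 * r) (tauQAux (r + 1) rest f)

/-- The operator τ_Q for a tableau Q encoded by its list of second-row entries. -/
noncomputable def tauQ (Q : List ℕ) : (Finset ℕ → ℝ) → (Finset ℕ → ℝ) := tauQAux 1 Q

/-- A standard Young tableau of shape (n − Q.length, Q.length), encoded by the strictly
increasing list of second-row entries, each entry a_r satisfying 2r ≤ a_r ≤ n. -/
def IsSYT (n : ℕ) (Q : List ℕ) : Prop :=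
  Q.Chain' (· < ·) ∧ (∀ x ∈ Q, x ≤ n) ∧ ∀ r < Q.length, 2 * (r + 1) ≤ Q.getD r 0

/-- The eigenvectors f_Q^{m,ℓ} (here m = Q.length). -/
noncomputable def fQvec (n : ℕ) (Q : List ℕ) (ℓ : ℕ) : Finset ℕ → ℝ :=
  tauQ Q (fT n Q.length ℓ)

/-- The orthogonal vectors g_Q^{m,i} (here m = Q.length). -/
noncomputable def gQvec (n : ℕ) (Q : List ℕ) (i : ℕ) : Finset ℕ → ℝ :=
  tauQ Q (gT n Q.length i)

/-- The constant γ_Q. -/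
noncomputable def gammaQ (Q : List ℕ) : ℝ :=
  ∏ r ∈ Finset.range Q.length, ∏ c ∈ Finset.Icc 2 (Q.getD r 0 - 2 * (r + 1) + 1),
    ((c : ℝ) ^ 2 - 1) / (c : ℝ) ^ 2

/-- The Murphy (Jucys–Murphy) operator M_r acting on functions. -/
noncomputable def murphy (r : ℕ) (f : Finset ℕ → ℝ) : Finset ℕ → ℝ :=
  fun U => ∑ i ∈ Finset.Icc 1 (r - 1), f (U.image (Equiv.swap i r))

/-- The state space as a finite type. -/
noncomputable def transpEndo (n a b : ℕ) :
    Module.End ℝ ((↥((Finset.Icc 1 n).powerset)) → ℝ) where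
  toFun f U := f (if h : U.1.image (Equiv.swap a b) ∈ (Finset.Icc 1 n).powerset
    then ⟨U.1.image (Equiv.swap a b), h⟩ else U)
  map_add' f g := rfl
  map_smul' c f := rfl

noncomputable def murphyEndo (n r : ℕ) :
    Module.End ℝ ((↥((Finset.Icc 1 n).powerset)) → ℝ) :=
  ∑ i ∈ Finset.Icc 1 (r - 1), transpEndo n i r

noncomputable def KEndo (n : ℕ) :
    Module.End ℝ ((↥((Finset.Icc 1 n).powerset)) → ℝ) where
  toFun f x := ∑ y : ↥((Finset.Icc 1 n).powerset), Kmat n x.1 y.1 * f y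
  map_add' f g := by funext x; simp [mul_add, Finset.sum_add_distrib]
  map_smul' c f := by funext x; simp [Finset.mul_sum, mul_left_comm]


lemma mem_image_swap (U : Finset ℕ) (a b x : ℕ) :
    x ∈ U.image (Equiv.swap a b) ↔ Equiv.swap a b x ∈ U := by
  constructor
  · intro h
    obtain ⟨y, hy, rfl⟩ := Finset.mem_image.1 h
    simpa using hy
  · intro h
    exact Finset.mem_image.2 ⟨_, h, by simp⟩

lemma image_swap_eq_self {U : Finset ℕ} {a b : ℕ} (h : a ∈ U ↔ b ∈ U) :
    U.image (Equiv.swap a b) = U := by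
  ext x
  rw [mem_image_swap]
  rcases eq_or_ne x a with rfl | hxa
  · rw [Equiv.swap_apply_left]; exact h.symm
  rcases eq_or_ne x b with rfl | hxb
  · rw [Equiv.swap_apply_right]; exact h
  · rw [Equiv.swap_apply_of_ne_of_ne hxa hxb]

lemma gT_eq_zero_of_broken {n m i : ℕ} {W : Finset ℕ} {t : ℕ} (ht1 : 1 ≤ t) (htm : t ≤ m)
    (hb : (2*t-1 ∈ W) ↔ (2*t ∈ W)) : gT n m i W = 0 := by
  unfold gT
  rw [if_neg]
  rintro ⟨hp, -⟩
  have := hp t (Finset.mem_Icc.2 ⟨ht1, htm⟩)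
  tauto

lemma gT_congr {n m i : ℕ} {W W' : Finset ℕ}
    (hpair : ∀ t ∈ Finset.Icc 1 m,
      ((2*t-1 ∈ W) ↔ ¬(2*t ∈ W)) ↔ ((2*t-1 ∈ W') ↔ ¬(2*t ∈ W')))
    (hcnt : (W ∩ Finset.Icc (2*m+1) n).card = (W' ∩ Finset.Icc (2*m+1) n).card)
    (hsign : (W ∩ (Finset.range m).image (fun r => 2*r+1)).card
           = (W' ∩ (Finset.range m).image (fun r => 2*r+1)).card) :
    gT n m i W = gT n m i W' := by
  unfold gT
  rw [hsign, hcnt]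
  refine if_congr ?_ rfl rfl
  constructor
  · rintro ⟨h1, h2⟩; exact ⟨fun t ht => (hpair t ht).1 (h1 t ht), h2⟩
  · rintro ⟨h1, h2⟩; exact ⟨fun t ht => (hpair t ht).2 (h1 t ht), h2⟩

lemma gT_neg {n m i : ℕ} {W W' : Finset ℕ}
    (hpair : ∀ t ∈ Finset.Icc 1 m,
      ((2*t-1 ∈ W) ↔ ¬(2*t ∈ W)) ↔ ((2*t-1 ∈ W') ↔ ¬(2*t ∈ W')))
    (hcnt : (W ∩ Finset.Icc (2*m+1) n).card = (W' ∩ Finset.Icc (2*m+1) n).card)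
    (hsign : ((-1 : ℝ)) ^ ((W ∩ (Finset.range m).image (fun r => 2*r+1)).card)
           = -((-1 : ℝ)) ^ ((W' ∩ (Finset.range m).image (fun r => 2*r+1)).card)) :
    gT n m i W = - gT n m i W' := by
  unfold gT
  rw [hcnt]
  by_cases h : (∀ t ∈ Finset.Icc 1 m, ((2*t-1 ∈ W') ↔ ¬(2*t ∈ W'))) ∧
      (W' ∩ Finset.Icc (2*m+1) n).card = i
  · rw [if_pos h, if_pos ⟨fun t ht => (hpair t ht).2 (h.1 t ht), h.2⟩, hsign]
  · rw [if_neg h, if_neg (fun hc => h ⟨fun t ht => (hpair t ht).1 (hc.1 t ht), hc.2⟩)]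
    ring

lemma mem_signset {m x : ℕ} (hx : x ∈ (Finset.range m).image (fun r => 2*r+1)) :
    x % 2 = 1 ∧ x < 2*m := by
  obtain ⟨t, ht, rfl⟩ := Finset.mem_image.1 hx
  simp only [Finset.mem_range] at ht
  omega

lemma signset_mem {m x : ℕ} (h1 : x % 2 = 1) (h2 : x < 2*m) :
    x ∈ (Finset.range m).image (fun r => 2*r+1) :=
  Finset.mem_image.2 ⟨x / 2, Finset.mem_range.2 (by omega), by omega⟩

lemma gT_swap_high {n m i j r : ℕ} (U : Finset ℕ) (hj : 2*m < j) (hjr : j < r) (hrn : r ≤ n) :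
    gT n m i (U.image (Equiv.swap j r)) = gT n m i U := by
  by_cases h : j ∈ U ↔ r ∈ U
  · rw [image_swap_eq_self h]
  · apply gT_congr
    · intro t ht
      simp only [Finset.mem_Icc] at ht
      rw [mem_image_swap, mem_image_swap,
        Equiv.swap_apply_of_ne_of_ne (by omega) (by omega),
        Equiv.swap_apply_of_ne_of_ne (by omega) (by omega)]
    · have hVI : (U.image (Equiv.swap j r)) ∩ Finset.Icc (2*m+1) n
          = (U ∩ Finset.Icc (2*m+1) n).image (Equiv.swap j r) := by
        ext x
        rw [Finset.mem_inter, mem_image_swap, mem_image_swap, Finset.mem_inter]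
        have hx : x ∈ Finset.Icc (2*m+1) n ↔ Equiv.swap j r x ∈ Finset.Icc (2*m+1) n := by
          rcases eq_or_ne x j with rfl | hxj
          · rw [Equiv.swap_apply_left]; simp only [Finset.mem_Icc]; omega
          rcases eq_or_ne x r with rfl | hxr
          · rw [Equiv.swap_apply_right]; simp only [Finset.mem_Icc]; omega
          · rw [Equiv.swap_apply_of_ne_of_ne hxj hxr]
        rw [hx]
      rw [hVI, Finset.card_image_of_injective _ (Equiv.injective _)]
    · congr 1
      ext x
      rw [Finset.mem_inter, Finset.mem_inter, mem_image_swap]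
      by_cases hxS : x ∈ (Finset.range m).image (fun r => 2*r+1)
      · have := mem_signset hxS
        rw [Equiv.swap_apply_of_ne_of_ne (by omega) (by omega)]
      · tauto

lemma gT_swap_pair {n m i t : ℕ} (W : Finset ℕ) (ht1 : 1 ≤ t) (htm : t ≤ m) :
    gT n m i (W.image (Equiv.swap (2*t-1) (2*t))) = - gT n m i W := by
  by_cases hb : (2*t-1 ∈ W) ↔ (2*t ∈ W)
  · rw [image_swap_eq_self hb, gT_eq_zero_of_broken ht1 htm hb]
    ring
  · set V := W.image (Equiv.swap (2*t-1) (2*t)) with hV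
    have hmema : (2*t-1 ∈ V) ↔ (2*t ∈ W) := by
      rw [hV, mem_image_swap, Equiv.swap_apply_left]
    have hmemb : (2*t ∈ V) ↔ (2*t-1 ∈ W) := by
      rw [hV, mem_image_swap, Equiv.swap_apply_right]
    have hmem : ∀ x, x ≠ 2*t-1 → x ≠ 2*t → ((x ∈ V) ↔ (x ∈ W)) := by
      intro x h1 h2
      rw [hV, mem_image_swap, Equiv.swap_apply_of_ne_of_ne h1 h2]
    apply gT_neg
    · intro t' ht'
      simp only [Finset.mem_Icc] at ht'
      rcases eq_or_ne t' t with rfl | hne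
      · rw [hmema, hmemb]; tauto
      · rw [hmem _ (by omega) (by omega), hmem _ (by omega) (by omega)]
    · congr 1
      ext x
      rw [Finset.mem_inter, Finset.mem_inter]
      by_cases hxI : x ∈ Finset.Icc (2*m+1) n
      · have : 2*m+1 ≤ x := (Finset.mem_Icc.1 hxI).1
        rw [hmem _ (by omega) (by omega)]
      · tauto
    · -- sign flip
      have haS : (2*t-1) ∈ (Finset.range m).image (fun r => 2*r+1) :=
        signset_mem (by omega) (by omega)
      by_cases ha : 2*t-1 ∈ W
      · have hbW : ¬ (2*t ∈ W) := by tauto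
        have haV : ¬ (2*t-1 ∈ V) := by rw [hmema]; exact hbW
        have hset : W ∩ (Finset.range m).image (fun r => 2*r+1)
            = insert (2*t-1) (V ∩ (Finset.range m).image (fun r => 2*r+1)) := by
          ext x
          simp only [Finset.mem_inter, Finset.mem_insert]
          by_cases hxS : x ∈ (Finset.range m).image (fun r => 2*r+1)
          · rcases eq_or_ne x (2*t-1) with rfl | hxa
            · tauto
            · have hxodd := mem_signset hxS
              rw [hmem _ hxa (by omega)]
              tauto
          · constructor
            · rintro ⟨-, hx⟩; exact absurd hx hxS
            · rintro (rfl | ⟨-, hx⟩)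
              · exact absurd haS hxS
              · exact absurd hx hxS
        rw [hset, Finset.card_insert_of_notMem (by simp [haV]), pow_succ]
        ring
      · have hbW : (2*t ∈ W) := by tauto
        have haV : (2*t-1 ∈ V) := by rw [hmema]; exact hbW
        have hset : V ∩ (Finset.range m).image (fun r => 2*r+1)
            = insert (2*t-1) (W ∩ (Finset.range m).image (fun r => 2*r+1)) := by
          ext x
          simp only [Finset.mem_inter, Finset.mem_insert]
          by_cases hxS : x ∈ (Finset.range m).image (fun r => 2*r+1)
          · rcases eq_or_ne x (2*t-1) with rfl | hxa
            · tauto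
            · have hxodd := mem_signset hxS
              rw [hmem _ hxa (by omega)]
              tauto
          · constructor
            · rintro ⟨-, hx⟩; exact absurd hx hxS
            · rintro (rfl | ⟨-, hx⟩)
              · exact absurd haS hxS
              · exact absurd hx hxS
        rw [hset, Finset.card_insert_of_notMem (by simp [ha]), pow_succ]
        ring

lemma swap_comm_eq {U : Finset ℕ} {a b r : ℕ} (hab : a ≠ b) (har : a ≠ r) (hbr : b ≠ r)
    (h : a ∈ U ↔ b ∈ U) :
    (U.image (Equiv.swap a r)).image (Equiv.swap a b) = U.image (Equiv.swap b r) := by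
  ext x
  rw [mem_image_swap, mem_image_swap, mem_image_swap]
  rcases eq_or_ne x a with rfl | hxa
  · rw [Equiv.swap_apply_left, Equiv.swap_apply_of_ne_of_ne (Ne.symm hab) hbr,
      Equiv.swap_apply_of_ne_of_ne hab har]
    exact h.symm
  rcases eq_or_ne x b with rfl | hxb
  · rw [Equiv.swap_apply_right, Equiv.swap_apply_left, Equiv.swap_apply_left]
  rcases eq_or_ne x r with rfl | hxr
  · rw [Equiv.swap_apply_of_ne_of_ne (Ne.symm har) (Ne.symm hbr), Equiv.swap_apply_right,
      Equiv.swap_apply_right]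
    exact h
  · rw [Equiv.swap_apply_of_ne_of_ne hxa hxb, Equiv.swap_apply_of_ne_of_ne hxa hxr,
      Equiv.swap_apply_of_ne_of_ne hxb hxr]

lemma gT_pair_sum {n m i t r : ℕ} (U : Finset ℕ) (ht1 : 1 ≤ t) (htm : t ≤ m) (htr : 2*t < r) :
    gT n m i (U.image (Equiv.swap (2*t-1) r)) + gT n m i (U.image (Equiv.swap (2*t) r))
      = gT n m i U := by
  by_cases hb : (2*t-1 ∈ U) ↔ (2*t ∈ U)
  · rw [← swap_comm_eq (a := 2*t-1) (b := 2*t) (by omega) (by omega) (by omega) hb,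
      gT_swap_pair _ ht1 htm, gT_eq_zero_of_broken ht1 htm hb]
    ring
  · by_cases har : (2*t-1 ∈ U) ↔ (r ∈ U)
    · rw [image_swap_eq_self har]
      have h0 : gT n m i (U.image (Equiv.swap (2*t) r)) = 0 := by
        apply gT_eq_zero_of_broken ht1 htm
        rw [mem_image_swap, mem_image_swap,
          Equiv.swap_apply_of_ne_of_ne (by omega) (by omega), Equiv.swap_apply_left]
        tauto
      rw [h0, add_zero]
    · have hbr2 : (2*t ∈ U) ↔ (r ∈ U) := by tauto
      rw [image_swap_eq_self hbr2]
      have h0 : gT n m i (U.image (Equiv.swap (2*t-1) r)) = 0 := by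
        apply gT_eq_zero_of_broken ht1 htm
        rw [mem_image_swap, mem_image_swap, Equiv.swap_apply_left,
          Equiv.swap_apply_of_ne_of_ne (by omega) (by omega)]
        tauto
      rw [h0, zero_add]

lemma sum_Icc_pairs (f : ℕ → ℝ) (M : ℕ) :
    ∑ j ∈ Finset.Icc 1 (2*M), f j = ∑ t ∈ Finset.Icc 1 M, (f (2*t-1) + f (2*t)) := by
  induction M with
  | zero => simp
  | succ M ih =>
    have h1 : 2*(M+1) = (2*M+1)+1 := by ring
    rw [h1, Finset.sum_Icc_succ_top (by omega), Finset.sum_Icc_succ_top (by omega),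
      Finset.sum_Icc_succ_top (by omega), ih]
    have e1 : 2*(M+1)-1 = 2*M+1 := by omega
    have e2 : 2*(M+1) = 2*M+1+1 := by omega
    rw [e1, e2]
    ring

/-- g_T^{m,i} is a simultaneous eigenvector of all Murphy operators M_r,
with eigenvalue the content of the box of r in the column reading tableau of
shape (n−m,m). -/
theorem gT_murphy_eigenvector (n m i : ℕ) (hm : 2 * m ≤ n) (hi : i ≤ n - 2 * m)
    (r : ℕ) (hr2 : 2 ≤ r) (hrn : r ≤ n) (U : Finset ℕ) (hU : U ⊆ Finset.Icc 1 n) :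
    murphy r (gT n m i) U =
      (if r ≤ 2 * m then (if Odd r then ((r : ℝ) - 1) / 2 else (r : ℝ) / 2 - 2)
        else (r : ℝ) - m - 1) * gT n m i U := by
  have hgT : murphy r (gT n m i) U
      = ∑ j ∈ Finset.Icc 1 (r-1), gT n m i (U.image (Equiv.swap j r)) := rfl
  rw [hgT]
  by_cases hcase : r ≤ 2*m
  · rw [if_pos hcase]
    rcases Nat.even_or_odd r with he | ho
    · obtain ⟨t, ht⟩ := he
      have hrt : r = 2*t := by omega
      subst hrt
      have ht1 : 1 ≤ t := by omega
      rw [if_neg (by rintro ⟨k, hk⟩; omega)]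
      have e : 2*t - 1 = 2*(t-1)+1 := by omega
      rw [e, Finset.sum_Icc_succ_top (by omega), sum_Icc_pairs]
      rw [Finset.sum_congr rfl (fun t' ht' => gT_pair_sum U
        (Finset.mem_Icc.1 ht').1
        (by have := (Finset.mem_Icc.1 ht').2; omega)
        (by have := (Finset.mem_Icc.1 ht').2; omega))]
      rw [Finset.sum_const, Nat.card_Icc]
      have e2 : 2*(t-1)+1 = 2*t-1 := by omega
      rw [e2, gT_swap_pair U ht1 (by omega)]
      obtain ⟨s, rfl⟩ : ∃ s, t = s + 1 := ⟨t-1, by omega⟩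
      simp only [Nat.add_sub_cancel, nsmul_eq_mul]
      push_cast
      ring
    · obtain ⟨t, ht⟩ := ho
      subst ht
      have ht1 : 1 ≤ t := by omega
      rw [if_pos ⟨t, rfl⟩]
      have e : 2*t + 1 - 1 = 2*t := by omega
      rw [e, sum_Icc_pairs]
      rw [Finset.sum_congr rfl (fun t' ht' => gT_pair_sum U
        (Finset.mem_Icc.1 ht').1
        (by have := (Finset.mem_Icc.1 ht').2; omega)
        (by have := (Finset.mem_Icc.1 ht').2; omega))]
      rw [Finset.sum_const, Nat.card_Icc]
      simp only [Nat.add_sub_cancel, nsmul_eq_mul]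
      push_cast
      ring
  · rw [if_neg hcase]
    push_neg at hcase
    have hsplit : Finset.Icc 1 (r-1) = Finset.Icc 1 (2*m) ∪ Finset.Icc (2*m+1) (r-1) := by
      ext x; simp only [Finset.mem_Icc, Finset.mem_union]; omega
    have hdisj : Disjoint (Finset.Icc 1 (2*m)) (Finset.Icc (2*m+1) (r-1)) := by
      rw [Finset.disjoint_left]
      intro x hx hx'
      simp only [Finset.mem_Icc] at hx hx'
      omega
    rw [hsplit, Finset.sum_union hdisj, sum_Icc_pairs]
    rw [Finset.sum_congr rfl (fun t' ht' => gT_pair_sum U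
      (Finset.mem_Icc.1 ht').1
      (Finset.mem_Icc.1 ht').2
      (by have := (Finset.mem_Icc.1 ht').2; omega))]
    rw [Finset.sum_congr rfl (fun j hj => gT_swap_high U
      (by have := (Finset.mem_Icc.1 hj).1; omega)
      (by have := (Finset.mem_Icc.1 hj).2; omega)
      hrn)]
    rw [Finset.sum_const, Finset.sum_const]
    obtain ⟨k, rfl⟩ : ∃ k, r = 2*m+1+k := ⟨r-2*m-1, by omega⟩
    have c1 : (Finset.Icc 1 m).card = m := by rw [Nat.card_Icc]; omega
    have c2 : (Finset.Icc (2*m+1) (2*m+1+k-1)).card = k := by rw [Nat.card_Icc]; omega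
    rw [c1, c2, nsmul_eq_mul, nsmul_eq_mul]
    push_cast
    ring
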